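/- Assume Ω ∈ (0, π/2). Let (M, θ) be an admissible curve with plane curve Z = (x̂, ŷ) and maximal curvature e ≤ 1/R_a, so that M ≥ l, and set ζ₀ := −(x̂(l) − R_a sin Ω)·sin Ω + (ŷ(l) − R_a (1 − cos Ω))·cos Ω. If ζ₀ = 0, then e = 1/R_a, M = L₀, and θ = φ₀ on [0, L₀]; that is, the curve (M, θ) coincides with the arc-then-segment curve (L₀, φ₀). -/

import Mathlib

open Real

/-- `φ` is `K`-Lipschitz on `[0, L]`. -/
def LipOn (φ : ℝ → ℝ) (L K : ℝ) : Prop :=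
  ∀ s ∈ Set.Icc (0:ℝ) L, ∀ t ∈ Set.Icc (0:ℝ) L, |φ s - φ t| ≤ K * |s - t|

/-- The maximal curvature of the curve `(L, φ)`: the least Lipschitz constant of `φ`
(essential supremum of `φ'`) on `[0, L]`. -/
noncomputable def maxCurv (φ : ℝ → ℝ) (L : ℝ) : ℝ :=
  sInf {K : ℝ | 0 ≤ K ∧ LipOn φ L K}

/-- An admissible curve for the data `(Ω, b₁, b₂)` : a pair `(L, φ)` with `L > 0`,
`φ` nondecreasing and Lipschitz on `[0, L]`, `φ 0 = 0`, `φ L = Ω`,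
`∫₀^L cos (φ s) ds = b₁` and `∫₀^L sin (φ s) ds = b₂`. -/
def Admissible (Ω b₁ b₂ L : ℝ) (φ : ℝ → ℝ) : Prop :=
  0 < L ∧ MonotoneOn φ (Set.Icc 0 L) ∧ (∃ K : ℝ, 0 ≤ K ∧ LipOn φ L K) ∧
  φ 0 = 0 ∧ φ L = Ω ∧
  (∫ s in (0:ℝ)..L, Real.cos (φ s)) = b₁ ∧
  (∫ s in (0:ℝ)..L, Real.sin (φ s)) = b₂

/-- First coordinate of the associated plane curve. -/
noncomputable def xcoord (φ : ℝ → ℝ) (s : ℝ) : ℝ := ∫ t in (0:ℝ)..s, Real.cos (φ t)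

/-- Second coordinate of the associated plane curve. -/
noncomputable def ycoord (φ : ℝ → ℝ) (s : ℝ) : ℝ := ∫ t in (0:ℝ)..s, Real.sin (φ t)

/-!
The Lipschitz bound `maxCurv θ M ≤ 1 / R_a` together with `θ 0 = 0` gives `θ t ≤ t / R_a`, so on
`[0, l]` the curve turns no faster than the arc `φ₀`. Since `0 ≤ θ ≤ Ω < π / 2`, this gives
`sin (θ t - Ω) ≤ sin (t / R_a - Ω)`, and `ζ₀` is exactly the integral over `[0, l]` of the
difference of these two continuous functions. So `ζ₀ = 0` forces `θ = φ₀` on `[0, l]`. Then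
`θ l = Ω = θ M` and monotonicity make `θ` constant on `[l, M]`, and the first coordinate of the
endpoint, `R_a sin Ω + (M - l) cos Ω = b₁`, gives `M = l + D`. Finally `θ` rises by `Ω` over a
length `l`, so its maximal curvature is at least `Ω / l = 1 / R_a`.
-/

open Set intervalIntegral MeasureTheory

namespace LipOn

variable {φ : ℝ → ℝ} {L K : ℝ}

theorem mono (h : LipOn φ L K) {K' : ℝ} (hK : K ≤ K') : LipOn φ L K' :=
  fun s hs t ht => (h s hs t ht).trans (mul_le_mul_of_nonneg_right hK (abs_nonneg _))

theorem continuousOn (h : LipOn φ L K) : ContinuousOn φ (Icc 0 L) := by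
  refine (LipschitzOnWith.of_dist_le_mul (K := K.toNNReal) fun s hs t ht => ?_).continuousOn
  rw [Real.dist_eq, Real.dist_eq]
  exact (h s hs t ht).trans (mul_le_mul_of_nonneg_right (le_coe_toNNReal K) (abs_nonneg _))

theorem le_mul_of_map_zero (h : LipOn φ L K) (hφ : φ 0 = 0) {t : ℝ} (ht : t ∈ Icc 0 L) :
    φ t ≤ K * t := by
  have := h t ht 0 ⟨le_rfl, ht.1.trans ht.2⟩
  rw [hφ, sub_zero, sub_zero, abs_of_nonneg ht.1] at this
  exact (le_abs_self _).trans this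

end LipOn

section maxCurv

variable {φ : ℝ → ℝ} {L : ℝ}

theorem div_le_maxCurv (hφ : ∃ K, 0 ≤ K ∧ LipOn φ L K) {s t : ℝ} (hs : s ∈ Icc 0 L)
    (ht : t ∈ Icc 0 L) (hst : s ≠ t) : |φ s - φ t| / |s - t| ≤ maxCurv φ L :=
  le_csInf hφ fun _ hK => (div_le_iff₀ (abs_pos.2 (sub_ne_zero.2 hst))).2 (hK.2 s hs t ht)

theorem lipOn_maxCurv (hφ : ∃ K, 0 ≤ K ∧ LipOn φ L K) : LipOn φ L (maxCurv φ L) := by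
  intro s hs t ht
  rcases eq_or_ne s t with rfl | hst
  · simp
  · exact (div_le_iff₀ (abs_pos.2 (sub_ne_zero.2 hst))).1 (div_le_maxCurv hφ hs ht hst)

end maxCurv

theorem eqOn_of_le_of_integral_eq {f g : ℝ → ℝ} {a b : ℝ} (hab : a < b)
    (hf : ContinuousOn f (Icc a b)) (hg : ContinuousOn g (Icc a b))
    (hle : ∀ x ∈ Icc a b, f x ≤ g x) (heq : ∫ x in a..b, f x = ∫ x in a..b, g x) :
    EqOn f g (Icc a b) := by
  intro c hc
  by_contra hfg
  exact (integral_lt_integral_of_continuousOn_of_le_of_exists_lt hab hf hg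
    (fun x hx => hle x (Ioc_subset_Icc_self hx)) ⟨c, hc, (hle c hc).lt_of_ne hfg⟩).ne heq

theorem MonotoneOn.eqOn_const_of_eq {α β : Type*} [Preorder α] [PartialOrder β] {f : α → β}
    {a b c : α} (hf : MonotoneOn f (Icc a b)) (hc : c ∈ Icc a b) (hcb : f c = f b) :
    EqOn f (fun _ => f b) (Icc c b) := fun _ hx =>
  le_antisymm (hf ⟨hc.1.trans hx.1, hx.2⟩ (right_mem_Icc.2 (hc.1.trans hc.2)) hx.2)
    (hcb ▸ hf hc ⟨hc.1.trans hx.1, hx.2⟩ hx.1)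

theorem xcoord_div (R s : ℝ) (hR : R ≠ 0) : xcoord (· / R) s = R * sin (s / R) := by
  simp [xcoord, integral_comp_div _ hR]

theorem ycoord_div (R s : ℝ) (hR : R ≠ 0) : ycoord (· / R) s = R * (1 - cos (s / R)) := by
  simp [ycoord, integral_comp_div _ hR]

theorem integral_sin_sub {φ : ℝ → ℝ} {s : ℝ} (Ω : ℝ)
    (hφ : ContinuousOn φ (uIcc 0 s)) :
    ∫ t in 0..s, sin (φ t - Ω) = ycoord φ s * cos Ω - xcoord φ s * sin Ω := by
  have hsin : IntervalIntegrable (fun t => sin (φ t)) volume 0 s :=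
    (continuous_sin.comp_continuousOn hφ).intervalIntegrable
  have hcos : IntervalIntegrable (fun t => cos (φ t)) volume 0 s :=
    (continuous_cos.comp_continuousOn hφ).intervalIntegrable
  simp only [ycoord, xcoord, sin_sub]
  rw [integral_sub (hsin.mul_const _) (hcos.mul_const _), intervalIntegral.integral_mul_const,
    intervalIntegral.integral_mul_const]

theorem eqOn_div_of_integral_sin_sub_eq {θ : ℝ → ℝ} {R Ω : ℝ} (hR : 0 < R)
    (hΩ : Ω ∈ Ioc 0 (π / 2)) (hθ : ContinuousOn θ (Icc 0 (R * Ω)))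
    (hθ0 : ∀ t ∈ Icc 0 (R * Ω), 0 ≤ θ t) (hθle : ∀ t ∈ Icc 0 (R * Ω), θ t ≤ t / R)
    (hint : ∫ t in 0..R * Ω, sin (θ t - Ω) = ∫ t in 0..R * Ω, sin (t / R - Ω)) :
    EqOn θ (· / R) (Icc 0 (R * Ω)) := by
  have hmem : ∀ t ∈ Icc 0 (R * Ω),
      θ t - Ω ∈ Icc (-(π / 2)) (π / 2) ∧ t / R - Ω ∈ Icc (-(π / 2)) (π / 2) := by
    intro t ht
    have : t / R ≤ Ω := (div_le_iff₀ hR).2 (by linarith [ht.2])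
    have := hθ0 t ht
    have := hθle t ht
    refine ⟨⟨?_, ?_⟩, ⟨?_, ?_⟩⟩ <;> linarith [div_nonneg ht.1 hR.le, hΩ.1, hΩ.2]
  have hsin : EqOn (fun t => sin (θ t - Ω)) (fun t => sin (t / R - Ω)) (Icc 0 (R * Ω)) :=
    eqOn_of_le_of_integral_eq (mul_pos hR hΩ.1)
      (continuous_sin.comp_continuousOn (hθ.sub continuousOn_const))
      (by fun_prop : Continuous fun t => sin (t / R - Ω)).continuousOn
      (fun t ht => strictMonoOn_sin.monotoneOn (hmem t ht).1 (hmem t ht).2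
        (by linarith [hθle t ht]))
      hint
  intro t ht
  have := injOn_sin (hmem t ht).1 (hmem t ht).2 (hsin ht)
  simpa using this

theorem eqOn_div_of_zeta_eq_zero {θ : ℝ → ℝ} {R Ω : ℝ} (hR : 0 < R)
    (hΩ : Ω ∈ Ioc 0 (π / 2)) (hθ : ContinuousOn θ (Icc 0 (R * Ω)))
    (hθ0 : ∀ t ∈ Icc 0 (R * Ω), 0 ≤ θ t) (hθle : ∀ t ∈ Icc 0 (R * Ω), θ t ≤ t / R)
    (hζ : -(xcoord θ (R * Ω) - R * sin Ω) * sin Ω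
      + (ycoord θ (R * Ω) - R * (1 - cos Ω)) * cos Ω = 0) :
    EqOn θ (· / R) (Icc 0 (R * Ω)) := by
  refine eqOn_div_of_integral_sin_sub_eq hR hΩ hθ hθ0 hθle ?_
  have hl : 0 ≤ R * Ω := (mul_pos hR hΩ.1).le
  rw [integral_sin_sub Ω (by rwa [uIcc_of_le hl]),
    integral_sin_sub Ω (by fun_prop : Continuous (· / R)).continuousOn,
    xcoord_div _ _ hR.ne', ycoord_div _ _ hR.ne', mul_div_cancel_left₀ _ hR.ne']
  linear_combination hζ

theorem xcoord_arc_segment {θ : ℝ → ℝ} {R Ω M : ℝ} (hR : R ≠ 0) (hl : 0 ≤ R * Ω)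
    (hlM : R * Ω ≤ M) (hθ : ContinuousOn θ (Icc 0 M)) (harc : EqOn θ (· / R) (Icc 0 (R * Ω)))
    (hseg : EqOn θ (fun _ => Ω) (Icc (R * Ω) M)) :
    xcoord θ M = R * sin Ω + (M - R * Ω) * cos Ω := by
  have hcos : ContinuousOn (fun t => cos (θ t)) (Icc 0 M) := continuous_cos.comp_continuousOn hθ
  have harc_int : ∫ t in 0..R * Ω, cos (θ t) = xcoord (· / R) (R * Ω) :=
    integral_congr fun t ht => by rw [uIcc_of_le hl] at ht; simp only [harc ht]
  have hseg_int : ∫ t in R * Ω..M, cos (θ t) = ∫ _ in R * Ω..M, cos Ω :=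
    integral_congr fun t ht => by rw [uIcc_of_le hlM] at ht; simp only [hseg ht]
  rw [xcoord, ← integral_add_adjacent_intervals
      ((hcos.mono (Icc_subset_Icc_right hlM)).intervalIntegrable_of_Icc hl)
      ((hcos.mono (Icc_subset_Icc_left hl)).intervalIntegrable_of_Icc hlM),
    harc_int, hseg_int, xcoord_div _ _ hR, mul_div_cancel_left₀ _ hR,
    intervalIntegral.integral_const, smul_eq_mul]

theorem stmt8_general (Ω R_a D b₁ b₂ M : ℝ) (θ : ℝ → ℝ)
    (hΩ : Ω ∈ Set.Ioo 0 (Real.pi / 2)) (hRa : 0 < R_a)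
    (hb₁ : b₁ = R_a * Real.sin Ω + D * Real.cos Ω)
    (h : Admissible Ω b₁ b₂ M θ)
    (he : maxCurv θ M ≤ 1 / R_a)
    (hζ : -(xcoord θ (R_a * Ω) - R_a * Real.sin Ω) * Real.sin Ω
      + (ycoord θ (R_a * Ω) - R_a * (1 - Real.cos Ω)) * Real.cos Ω = 0) :
    maxCurv θ M = 1 / R_a ∧ M = R_a * Ω + D ∧
    ∀ s ∈ Set.Icc (0:ℝ) (R_a * Ω + D), θ s = min s (R_a * Ω) / R_a := by
  obtain ⟨hM, hmono, hlip, hθ0, hθM, hx, -⟩ := h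
  set l := R_a * Ω with hl_def
  have hl : 0 < l := mul_pos hRa hΩ.1
  have hθlip : LipOn θ M (1 / R_a) := (lipOn_maxCurv hlip).mono he
  have hθle (t : ℝ) (ht : t ∈ Icc 0 M) : θ t ≤ t / R_a :=
    (hθlip.le_mul_of_map_zero hθ0 ht).trans_eq (one_div_mul_eq_div _ _)
  have hlM : l ≤ M := by
    have := hθle M (right_mem_Icc.2 hM.le)
    rw [hθM, le_div_iff₀ hRa] at this
    linarith
  have hIcc : Icc 0 l ⊆ Icc 0 M := Icc_subset_Icc_right hlM
  have harc : EqOn θ (· / R_a) (Icc 0 l) :=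
    eqOn_div_of_zeta_eq_zero hRa (Ioo_subset_Ioc_self hΩ) (hθlip.continuousOn.mono hIcc)
      (fun t ht => hθ0 ▸ hmono (left_mem_Icc.2 hM.le) (hIcc ht) ht.1)
      (fun t ht => hθle t (hIcc ht)) hζ
  have hθl : θ l = Ω := (harc (right_mem_Icc.2 hl.le)).trans (mul_div_cancel_left₀ _ hRa.ne')
  have hseg : EqOn θ (fun _ => Ω) (Icc l M) :=
    hθM ▸ hmono.eqOn_const_of_eq ⟨hl.le, hlM⟩ (hθl.trans hθM.symm)
  have hML : M = l + D := by
    have hcos : 0 < cos Ω := cos_pos_of_mem_Ioo ⟨by linarith [hΩ.1, pi_pos], hΩ.2⟩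
    have := xcoord_arc_segment hRa.ne' hl.le hlM hθlip.continuousOn harc hseg
    rw [xcoord, hx, hb₁] at this
    have := mul_right_cancel₀ hcos.ne' (by linarith : D * cos Ω = (M - l) * cos Ω)
    linarith
  refine ⟨le_antisymm he ?_, hML, fun s hs => ?_⟩
  · have := div_le_maxCurv hlip ⟨hl.le, hlM⟩ (left_mem_Icc.2 hM.le) hl.ne'
    rw [one_div]
    rwa [hθl, hθ0, sub_zero, sub_zero, abs_of_pos hΩ.1, abs_of_pos hl,
      div_mul_cancel_right₀ hΩ.1.ne'] at this
  · rcases le_total s l with hsl | hls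
    · rw [min_eq_left hsl, harc ⟨hs.1, hsl⟩]
    · rw [min_eq_right hls, hseg ⟨hls, hML ▸ hs.2⟩, hl_def, mul_div_cancel_left₀ _ hRa.ne']

/-- If `Ω ∈ (0, π/2)`, the admissible curve `(M, θ)` has maximal curvature `e ≤ 1/R_a`
and `ζ₀ = 0`, then `e = 1/R_a`, `M = L₀ = R_a Ω + D` and `θ` coincides with the
arc-then-segment angle `φ₀(s) = min(s, R_a Ω)/R_a` on `[0, L₀]`. -/
theorem stmt8 (Ω R_a D b₁ b₂ M : ℝ) (θ : ℝ → ℝ)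
    (hΩ : Ω ∈ Set.Ioo 0 (Real.pi / 2)) (hRa : 0 < R_a) (hD : 0 ≤ D)
    (hb₁ : b₁ = R_a * Real.sin Ω + D * Real.cos Ω)
    (hb₂ : b₂ = R_a * (1 - Real.cos Ω) + D * Real.sin Ω)
    (h : Admissible Ω b₁ b₂ M θ)
    (he : maxCurv θ M ≤ 1 / R_a)
    (hζ : -(xcoord θ (R_a * Ω) - R_a * Real.sin Ω) * Real.sin Ω
      + (ycoord θ (R_a * Ω) - R_a * (1 - Real.cos Ω)) * Real.cos Ω = 0) :
    maxCurv θ M = 1 / R_a ∧ M = R_a * Ω + D ∧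
    ∀ s ∈ Set.Icc (0:ℝ) (R_a * Ω + D), θ s = min s (R_a * Ω) / R_a :=
  stmt8_general Ω R_a D b₁ b₂ M θ hΩ hRa hb₁ h he hζ
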